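/- Converse direction of the folk theorem (Proposition 1): Let G be a finite Bayesian game and G(D) a commitment game over G that has non-commitment devices. If a strategy profile σ is a Bayesian Nash equilibrium of G(D), then the induced interim expected payoff vector X^σ = (X^σ_j)_j is feasible and interim individually rational (INTIR). -/

import Mathlib

open MeasureTheory

noncomputable section

/-- Assemble a dependent profile from the `j`-component `xj` and the components `xm` of the
players other than `j`. -/
def combine {n : ℕ} {X : Fin n → Type} (j : Fin n) (xj : X j)
    (xm : ∀ i : {i : Fin n // i ≠ j}, X i.1) (i : Fin n) : X i :=
  if h : i = j then cast (congrArg X h).symm xj else xm ⟨i, h⟩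

/-- Conditional probability `q(t₋ⱼ | tⱼ)` of the other players' types given one's own type,
derived from the common prior `q`. -/
def condQ {n : ℕ} {T : Fin n → Type} [∀ i, Fintype (T i)]
    (q : (∀ i, T i) → ℝ) (j : Fin n) (tj : T j)
    (tm : ∀ i : {i : Fin n // i ≠ j}, T i.1) : ℝ :=
  q (combine j tj tm) /
    ∑ s : ∀ i : {i : Fin n // i ≠ j}, T i.1, q (combine j tj s)

/-- The action played in the base game by player `i` in the commitment game, given the
submitted device profile `d`, the true type profile `t`, and the realized signal `c`:
player `i`'s response function is applied to the others' devices, the disclosed types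
(player `j ≠ i` disclosing `t j` exactly when the `i`-entry of `j`'s disclosure vector is 1),
and the signal. -/
def play {n : ℕ} {T A D : Fin n → Type} {C : Type}
    (r : ∀ i : Fin n, D i → T i → (∀ j : {j : Fin n // j ≠ i}, D j.1) →
      (∀ j : {j : Fin n // j ≠ i}, Option (T j.1)) → C → A i)
    (y : ∀ i : Fin n, D i → T i → (∀ j : {j : Fin n // j ≠ i}, D j.1) →
      {j : Fin n // j ≠ i} → Bool)
    (d : ∀ i, D i) (t : ∀ i, T i) (c : C) (i : Fin n) : A i :=
  r i (d i) (t i) (fun j => d j.1)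
    (fun j =>
      if y j.1 (d j.1) (t j.1) (fun k => d k.1) ⟨i, Ne.symm j.2⟩ then some (t j.1)
      else none) c

/-- The interim expected payoff `Xᵠ_j(t_j)` of player `j` of type `tj` in the commitment game
under the strategy profile `σ`. -/
def interim {n : ℕ} {T A D : Fin n → Type} {C : Type} [MeasurableSpace C]
    [∀ i, Fintype (T i)]
    (q : (∀ i, T i) → ℝ) (u : ∀ _i : Fin n, (∀ i, T i) → (∀ i, A i) → ℝ)
    (r : ∀ i : Fin n, D i → T i → (∀ j : {j : Fin n // j ≠ i}, D j.1) →
      (∀ j : {j : Fin n // j ≠ i}, Option (T j.1)) → C → A i)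
    (y : ∀ i : Fin n, D i → T i → (∀ j : {j : Fin n // j ≠ i}, D j.1) →
      {j : Fin n // j ≠ i} → Bool)
    (ν : Measure C) (σ : ∀ i, T i → D i) (j : Fin n) (tj : T j) : ℝ :=
  ∑ tm : ∀ i : {i : Fin n // i ≠ j}, T i.1,
    condQ q j tj tm *
      ∫ c, u j (combine j tj tm)
        (play r y (fun i => σ i (combine j tj tm i)) (combine j tj tm) c) ∂ν

/-- A strategy profile `σ` is a Bayesian Nash equilibrium of the commitment game if no player
of any type can strictly increase their interim expected payoff by submitting a different
device. -/
def isBNE {n : ℕ} {T A D : Fin n → Type} {C : Type} [MeasurableSpace C]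
    [∀ i, Fintype (T i)]
    (q : (∀ i, T i) → ℝ) (u : ∀ _i : Fin n, (∀ i, T i) → (∀ i, A i) → ℝ)
    (r : ∀ i : Fin n, D i → T i → (∀ j : {j : Fin n // j ≠ i}, D j.1) →
      (∀ j : {j : Fin n // j ≠ i}, Option (T j.1)) → C → A i)
    (y : ∀ i : Fin n, D i → T i → (∀ j : {j : Fin n // j ≠ i}, D j.1) →
      {j : Fin n // j ≠ i} → Bool)
    (ν : Measure C) (σ : ∀ i, T i → D i) : Prop :=
  ∀ (j : Fin n) (tj : T j) (d' : D j),
    interim q u r y ν (Function.update σ j fun _ => d') j tj ≤ interim q u r y ν σ j tj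

/-- A payoff vector `x` is feasible if it is induced by some correlated policy `μ`. -/
def Feasible {n : ℕ} {T A : Fin n → Type} [∀ i, Fintype (T i)] [∀ i, Fintype (A i)]
    (q : (∀ i, T i) → ℝ) (u : ∀ _i : Fin n, (∀ i, T i) → (∀ i, A i) → ℝ)
    (x : ∀ j : Fin n, T j → ℝ) : Prop :=
  ∃ μ : (∀ i, T i) → (∀ i, A i) → ℝ,
    (∀ t a, 0 ≤ μ t a) ∧ (∀ t, ∑ a : ∀ i, A i, μ t a = 1) ∧
    ∀ (j : Fin n) (tj : T j),
      x j tj = ∑ tm : ∀ i : {i : Fin n // i ≠ j}, T i.1,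
        condQ q j tj tm *
          ∑ a : ∀ i, A i, μ (combine j tj tm) a * u j (combine j tj tm) a

/-- A payoff vector `x` is interim individually rational (INTIR) if each player `j` can be
held down to at most `x j` by a correlated policy `τ` of the other players depending only on
their own types. -/
def INTIR {n : ℕ} {T A : Fin n → Type} [∀ i, Fintype (T i)] [∀ i, Fintype (A i)]
    (q : (∀ i, T i) → ℝ) (u : ∀ _i : Fin n, (∀ i, T i) → (∀ i, A i) → ℝ)
    (x : ∀ j : Fin n, T j → ℝ) : Prop :=
  ∀ j : Fin n,
    ∃ τ : (∀ k : {k : Fin n // k ≠ j}, T k.1) → (∀ k : {k : Fin n // k ≠ j}, A k.1) → ℝ,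
      (∀ tm b, 0 ≤ τ tm b) ∧
      (∀ tm, ∑ b : ∀ k : {k : Fin n // k ≠ j}, A k.1, τ tm b = 1) ∧
      ∀ (tj : T j) (aj : A j),
        ∑ tm : ∀ k : {k : Fin n // k ≠ j}, T k.1,
          condQ q j tj tm *
            ∑ b : ∀ k : {k : Fin n // k ≠ j}, A k.1,
              τ tm b * u j (combine j tj tm) (combine j aj b) ≤ x j tj

/-!
The equilibrium payoffs are feasible because the law of the action profile that the devices
produce from the signal is itself a correlated policy.

For individual rationality, let player `j` deviate to a non-commitment device `κ j a`. This
device discloses nothing and the others cannot tell it from `κ j a₀`, so their actions are those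
they play against `κ j a₀` at a fixed type of `j`: a random variable whose law `τ(t₋ⱼ)` depends
only on `t₋ⱼ`. The deviation payoff is therefore that of `a` against `τ`, and the equilibrium
condition bounds it by `Xᵠⱼ(tⱼ)`.
-/

open Function

section FiniteLaw

variable {C B : Type} [MeasurableSpace C] [Fintype B] (ν : Measure C) {f : C → B}

theorem sum_measureReal_preimage_singleton [IsProbabilityMeasure ν]
    (hf : ∀ b, MeasurableSet (f ⁻¹' {b})) : ∑ b, ν.real (f ⁻¹' {b}) = 1 := by
  let _ : MeasurableSpace B := ⊤
  have hfm : Measurable f := measurable_to_countable' hf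
  have : IsProbabilityMeasure (ν.map f) := Measure.isProbabilityMeasure_map hfm.aemeasurable
  simpa [map_measureReal_apply hfm (measurableSet_singleton _)] using
    sum_measureReal_singleton (μ := ν.map f) Finset.univ

theorem integral_comp_eq_sum_measureReal_preimage [IsFiniteMeasure ν]
    (hf : ∀ b, MeasurableSet (f ⁻¹' {b})) (g : B → ℝ) :
    ∫ c, g (f c) ∂ν = ∑ b, ν.real (f ⁻¹' {b}) * g b := by
  let _ : MeasurableSpace B := ⊤
  have hfm : Measurable f := measurable_to_countable' hf
  rw [← integral_map hfm.aemeasurable (measurable_of_countable g).aestronglyMeasurable,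
    integral_fintype .of_finite]
  simp [map_measureReal_apply hfm (measurableSet_singleton _)]

theorem measurableSet_preimage_singleton_pi {ι : Type} [Finite ι] {X : ι → Type}
    {F : C → ∀ i, X i} (hF : ∀ i (x : X i), MeasurableSet {c | F c i = x}) (x : ∀ i, X i) :
    MeasurableSet (F ⁻¹' {x}) := by
  have : F ⁻¹' {x} = ⋂ i, {c | F c i = x i} := by
    ext c
    simp [funext_iff]
  rw [this]
  exact .iInter fun i => hF i (x i)

end FiniteLaw

section CommitmentGame

variable {n : ℕ} {T A D : Fin n → Type} {C : Type}

theorem combine_self {X : Fin n → Type} (j : Fin n) (xj : X j)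
    (xm : ∀ i : {i : Fin n // i ≠ j}, X i.1) : combine j xj xm j = xj := by
  simp [combine]

theorem combine_of_ne {X : Fin n → Type} (j : Fin n) (xj : X j)
    (xm : ∀ i : {i : Fin n // i ≠ j}, X i.1) {i : Fin n} (h : i ≠ j) :
    combine j xj xm i = xm ⟨i, h⟩ := by
  simp [combine, h]

theorem eq_combine {X : Fin n → Type} {j : Fin n} {x : ∀ i, X i} {xj : X j}
    {xm : ∀ i : {i : Fin n // i ≠ j}, X i.1} (hj : x j = xj)
    (hm : ∀ i : {i : Fin n // i ≠ j}, x i.1 = xm i) : x = combine j xj xm := by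
  funext i
  by_cases h : i = j
  · subst h
    rw [combine_self, hj]
  · rw [combine_of_ne _ _ _ h]
    exact hm ⟨i, h⟩

structure HasNonCommitmentDevices
    (r : ∀ i : Fin n, D i → T i → (∀ j : {j : Fin n // j ≠ i}, D j.1) →
      (∀ j : {j : Fin n // j ≠ i}, Option (T j.1)) → C → A i)
    (y : ∀ i : Fin n, D i → T i → (∀ j : {j : Fin n // j ≠ i}, D j.1) →
      {j : Fin n // j ≠ i} → Bool)
    (κ : ∀ j : Fin n, A j → D j) : Prop where
  response_eq (j : Fin n) (a : A j) (tj : T j) (dm : ∀ k : {k : Fin n // k ≠ j}, D k.1)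
    (θ : ∀ k : {k : Fin n // k ≠ j}, Option (T k.1)) (c : C) : r j (κ j a) tj dm θ c = a
  disclosure_eq_false (j : Fin n) (a : A j) (tj : T j)
    (dm : ∀ k : {k : Fin n // k ≠ j}, D k.1) (k : {k : Fin n // k ≠ j}) :
    y j (κ j a) tj dm k = false
  response_indist (j : Fin n) (a a' : A j) (k : Fin n) (hjk : j ≠ k) (e : D k) (tk : T k)
    (dm : ∀ l : {l : Fin n // l ≠ k}, D l.1) (θ : ∀ l : {l : Fin n // l ≠ k}, Option (T l.1))
    (c : C) :
    r k e tk (update dm ⟨j, hjk⟩ (κ j a)) θ c = r k e tk (update dm ⟨j, hjk⟩ (κ j a')) θ c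
  disclosure_indist (j : Fin n) (a a' : A j) (k : Fin n) (hjk : j ≠ k) (e : D k) (tk : T k)
    (dm : ∀ l : {l : Fin n // l ≠ k}, D l.1) (l : {l : Fin n // l ≠ k}) :
    y k e tk (update dm ⟨j, hjk⟩ (κ j a)) l = y k e tk (update dm ⟨j, hjk⟩ (κ j a')) l

variable {r : ∀ i : Fin n, D i → T i → (∀ j : {j : Fin n // j ≠ i}, D j.1) →
      (∀ j : {j : Fin n // j ≠ i}, Option (T j.1)) → C → A i}
    {y : ∀ i : Fin n, D i → T i → (∀ j : {j : Fin n // j ≠ i}, D j.1) →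
      {j : Fin n // j ≠ i} → Bool}
    {κ : ∀ j : Fin n, A j → D j}

theorem play_update_nonCommitment_eq_combine (hκ : HasNonCommitmentDevices r y κ) {j : Fin n}
    {d d' : ∀ i, D i} {t t' : ∀ i, T i} (hd : ∀ i ≠ j, d i = d' i) (ht : ∀ i ≠ j, t i = t' i)
    (a a' : A j) (c : C) :
    play r y (update d j (κ j a)) t c =
      combine j a fun k => play r y (update d' j (κ j a')) t' c k.1 := by
  have hdd' : ∀ x : D j, update d j x = update d' j x := fun x =>
    update_eq_iff.2 ⟨(update_self ..).symm, fun i hi => by rw [update_of_ne hi, hd i hi]⟩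
  rw [hdd' (κ j a)]
  refine eq_combine (by simp [play, hκ.response_eq]) fun ⟨k, hkj⟩ => ?_
  have hdm : ∀ (l : Fin n) (hjl : j ≠ l) (x : A j),
      (fun m : {m : Fin n // m ≠ l} => update d' j (κ j x) m.1) =
        update (fun m : {m : Fin n // m ≠ l} => d' m.1) ⟨j, hjl⟩ (κ j x) :=
    fun l hjl x => update_comp_eq_of_injective' d' Subtype.val_injective ⟨j, hjl⟩ _
  have hθ : (fun l : {l : Fin n // l ≠ k} =>
        if y l.1 (update d' j (κ j a) l.1) (t l.1) (fun m => update d' j (κ j a) m.1)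
          ⟨k, Ne.symm l.2⟩ then some (t l.1) else none) =
      fun l : {l : Fin n // l ≠ k} =>
        if y l.1 (update d' j (κ j a') l.1) (t' l.1) (fun m => update d' j (κ j a') m.1)
          ⟨k, Ne.symm l.2⟩ then some (t' l.1) else none := by
    funext ⟨l, hlk⟩
    by_cases hlj : l = j
    · subst hlj
      simp [hκ.disclosure_eq_false]
    · simp only [update_of_ne hlj, ht l hlj, hdm l (Ne.symm hlj),
        hκ.disclosure_indist j a a' l (Ne.symm hlj)]
  simp only [play, update_of_ne hkj, ht k hkj, hθ, hdm k (Ne.symm hkj),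
    hκ.response_indist j a a' k (Ne.symm hkj)]

def MeasurableResponses [MeasurableSpace C]
    (r : ∀ i : Fin n, D i → T i → (∀ j : {j : Fin n // j ≠ i}, D j.1) →
      (∀ j : {j : Fin n // j ≠ i}, Option (T j.1)) → C → A i) : Prop :=
  ∀ (i : Fin n) (di : D i) (ti : T i) (dm : ∀ j : {j : Fin n // j ≠ i}, D j.1)
    (θ : ∀ j : {j : Fin n // j ≠ i}, Option (T j.1)) (a : A i),
    MeasurableSet {c | r i di ti dm θ c = a}

variable [MeasurableSpace C] [∀ i, Fintype (T i)] [∀ i, Fintype (A i)]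
    {q : (∀ i, T i) → ℝ} {u : ∀ _i : Fin n, (∀ i, T i) → (∀ i, A i) → ℝ}
    {ν : Measure C} [IsProbabilityMeasure ν]

theorem feasible_interim (hrmeas : MeasurableResponses r) (σ : ∀ i, T i → D i) :
    Feasible q u (fun j tj => interim q u r y ν σ j tj) := by
  have hfib (d : ∀ i, D i) (t : ∀ i, T i) (a : ∀ i, A i) :
      MeasurableSet (play r y d t ⁻¹' {a}) :=
    measurableSet_preimage_singleton_pi (fun i ai => hrmeas i _ _ _ _ ai) a
  refine ⟨fun t a => ν.real (play r y (fun i => σ i (t i)) t ⁻¹' {a}),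
    fun _ _ => measureReal_nonneg, fun t => sum_measureReal_preimage_singleton ν (hfib _ t),
    fun j tj => Finset.sum_congr rfl fun tm _ => congrArg _ ?_⟩
  exact integral_comp_eq_sum_measureReal_preimage ν (hfib _ _) _

theorem intir_interim_of_isBNE [∀ i, Nonempty (T i)] [∀ i, Nonempty (A i)]
    (hrmeas : MeasurableResponses r) (hκ : HasNonCommitmentDevices r y κ)
    {σ : ∀ i, T i → D i} (hσ : isBNE q u r y ν σ) :
    INTIR q u (fun j tj => interim q u r y ν σ j tj) := by
  intro j
  obtain ⟨a₀⟩ : Nonempty (A j) := inferInstance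
  -- `κ j a₀` discloses nothing, so the choice of `j`'s type `t₀` below is immaterial.
  obtain ⟨t₀⟩ : Nonempty (T j) := inferInstance
  let others (tm : ∀ k : {k : Fin n // k ≠ j}, T k.1) (c : C) :
      ∀ k : {k : Fin n // k ≠ j}, A k.1 := fun k =>
    play r y (update (fun i => σ i (combine j t₀ tm i)) j (κ j a₀)) (combine j t₀ tm) c k.1
  have hfib (tm) (b) : MeasurableSet (others tm ⁻¹' {b}) :=
    measurableSet_preimage_singleton_pi (fun k ak => hrmeas k.1 _ _ _ _ ak) b
  refine ⟨fun tm b => ν.real (others tm ⁻¹' {b}), fun _ _ => measureReal_nonneg,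
    fun tm => sum_measureReal_preimage_singleton ν (hfib tm), fun tj aj => ?_⟩
  refine le_trans (le_of_eq ?_) (hσ j tj (κ j aj))
  refine Finset.sum_congr rfl fun tm _ => congrArg _ ?_
  have hdev (c : C) :
      play r y (fun i => update σ j (fun _ => κ j aj) i (combine j tj tm i)) (combine j tj tm) c
        = combine j aj (others tm c) := by
    have hupd : (fun i => update σ j (fun _ => κ j aj) i (combine j tj tm i)) =
        update (fun i => σ i (combine j tj tm i)) j (κ j aj) :=
      funext fun i => apply_update (fun i (s : T i → D i) => s (combine j tj tm i)) σ j _ i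
    have hoff (i) (hi : i ≠ j) : combine j tj tm i = combine j t₀ tm i := by
      rw [combine_of_ne _ _ _ hi, combine_of_ne _ _ _ hi]
    rw [hupd]
    exact play_update_nonCommitment_eq_combine hκ (fun i hi => by rw [hoff i hi]) hoff aj a₀ c
  simp only [hdev]
  exact (integral_comp_eq_sum_measureReal_preimage ν (hfib tm) _).symm

end CommitmentGame

theorem equilibrium_payoffs_feasible_and_INTIR_general
    {n : ℕ} {T A D : Fin n → Type} {C : Type} [MeasurableSpace C]
    [∀ i, Fintype (T i)] [∀ i, Nonempty (T i)]
    [∀ i, Fintype (A i)] [∀ i, Nonempty (A i)]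
    (q : (∀ i, T i) → ℝ)
    (u : ∀ _i : Fin n, (∀ i, T i) → (∀ i, A i) → ℝ)
    (r : ∀ i : Fin n, D i → T i → (∀ j : {j : Fin n // j ≠ i}, D j.1) →
      (∀ j : {j : Fin n // j ≠ i}, Option (T j.1)) → C → A i)
    (y : ∀ i : Fin n, D i → T i → (∀ j : {j : Fin n // j ≠ i}, D j.1) →
      {j : Fin n // j ≠ i} → Bool)
    (ν : Measure C) [IsProbabilityMeasure ν]
    (hrmeas : ∀ (i : Fin n) (di : D i) (ti : T i)
      (dm : ∀ j : {j : Fin n // j ≠ i}, D j.1)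
      (θ : ∀ j : {j : Fin n // j ≠ i}, Option (T j.1)) (a : A i),
      MeasurableSet {c | r i di ti dm θ c = a})
    -- non-commitment devices
    (κ : ∀ j : Fin n, A j → D j)
    (hκr : ∀ (j : Fin n) (a : A j) (tj : T j) (dm : ∀ k : {k : Fin n // k ≠ j}, D k.1)
      (θ : ∀ k : {k : Fin n // k ≠ j}, Option (T k.1)) (c : C),
      r j (κ j a) tj dm θ c = a)
    (hκy : ∀ (j : Fin n) (a : A j) (tj : T j) (dm : ∀ k : {k : Fin n // k ≠ j}, D k.1)
      (k : {k : Fin n // k ≠ j}), y j (κ j a) tj dm k = false)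
    -- other players cannot distinguish among player `j`'s non-commitment devices
    (hκindist_r : ∀ (j : Fin n) (a a' : A j) (k : Fin n) (hjk : j ≠ k) (e : D k) (tk : T k)
      (dm : ∀ l : {l : Fin n // l ≠ k}, D l.1)
      (θ : ∀ l : {l : Fin n // l ≠ k}, Option (T l.1)) (c : C),
      r k e tk (Function.update dm ⟨j, hjk⟩ (κ j a)) θ c =
        r k e tk (Function.update dm ⟨j, hjk⟩ (κ j a')) θ c)
    (hκindist_y : ∀ (j : Fin n) (a a' : A j) (k : Fin n) (hjk : j ≠ k) (e : D k) (tk : T k)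
      (dm : ∀ l : {l : Fin n // l ≠ k}, D l.1) (l : {l : Fin n // l ≠ k}),
      y k e tk (Function.update dm ⟨j, hjk⟩ (κ j a)) l =
        y k e tk (Function.update dm ⟨j, hjk⟩ (κ j a')) l)
    -- `σ` is a Bayesian Nash equilibrium of the commitment game
    (σ : ∀ i, T i → D i) (hσ : isBNE q u r y ν σ) :
    Feasible q u (fun j tj => interim q u r y ν σ j tj) ∧
      INTIR q u (fun j tj => interim q u r y ν σ j tj) := by
  exact ⟨feasible_interim hrmeas σ,
    intir_interim_of_isBNE hrmeas ⟨hκr, hκy, hκindist_r, hκindist_y⟩ hσ⟩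

/-- Proposition 1: in a commitment game with non-commitment devices
(witnessed by `κ`), the interim expected payoff vector of any Bayesian Nash equilibrium `σ`
is feasible and interim individually rational. -/
theorem equilibrium_payoffs_feasible_and_INTIR
    {n : ℕ} {T A D : Fin n → Type} {C : Type} [MeasurableSpace C]
    [∀ i, Fintype (T i)] [∀ i, Nonempty (T i)]
    [∀ i, Fintype (A i)] [∀ i, Nonempty (A i)] [∀ i, Nonempty (D i)]
    (q : (∀ i, T i) → ℝ) (hqpos : ∀ t, 0 < q t) (hqsum : ∑ t, q t = 1)
    (u : ∀ _i : Fin n, (∀ i, T i) → (∀ i, A i) → ℝ)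
    (r : ∀ i : Fin n, D i → T i → (∀ j : {j : Fin n // j ≠ i}, D j.1) →
      (∀ j : {j : Fin n // j ≠ i}, Option (T j.1)) → C → A i)
    (y : ∀ i : Fin n, D i → T i → (∀ j : {j : Fin n // j ≠ i}, D j.1) →
      {j : Fin n // j ≠ i} → Bool)
    (ν : Measure C) [IsProbabilityMeasure ν]
    (hrmeas : ∀ (i : Fin n) (di : D i) (ti : T i)
      (dm : ∀ j : {j : Fin n // j ≠ i}, D j.1)
      (θ : ∀ j : {j : Fin n // j ≠ i}, Option (T j.1)) (a : A i),
      MeasurableSet {c | r i di ti dm θ c = a})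
    -- non-commitment devices
    (κ : ∀ j : Fin n, A j → D j)
    (hκr : ∀ (j : Fin n) (a : A j) (tj : T j) (dm : ∀ k : {k : Fin n // k ≠ j}, D k.1)
      (θ : ∀ k : {k : Fin n // k ≠ j}, Option (T k.1)) (c : C),
      r j (κ j a) tj dm θ c = a)
    (hκy : ∀ (j : Fin n) (a : A j) (tj : T j) (dm : ∀ k : {k : Fin n // k ≠ j}, D k.1)
      (k : {k : Fin n // k ≠ j}), y j (κ j a) tj dm k = false)
    -- other players cannot distinguish among player `j`'s non-commitment devices
    (hκindist_r : ∀ (j : Fin n) (a a' : A j) (k : Fin n) (hjk : j ≠ k) (e : D k) (tk : T k)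
      (dm : ∀ l : {l : Fin n // l ≠ k}, D l.1)
      (θ : ∀ l : {l : Fin n // l ≠ k}, Option (T l.1)) (c : C),
      r k e tk (Function.update dm ⟨j, hjk⟩ (κ j a)) θ c =
        r k e tk (Function.update dm ⟨j, hjk⟩ (κ j a')) θ c)
    (hκindist_y : ∀ (j : Fin n) (a a' : A j) (k : Fin n) (hjk : j ≠ k) (e : D k) (tk : T k)
      (dm : ∀ l : {l : Fin n // l ≠ k}, D l.1) (l : {l : Fin n // l ≠ k}),
      y k e tk (Function.update dm ⟨j, hjk⟩ (κ j a)) l =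
        y k e tk (Function.update dm ⟨j, hjk⟩ (κ j a')) l)
    -- `σ` is a Bayesian Nash equilibrium of the commitment game
    (σ : ∀ i, T i → D i) (hσ : isBNE q u r y ν σ) :
    Feasible q u (fun j tj => interim q u r y ν σ j tj) ∧
      INTIR q u (fun j tj => interim q u r y ν σ j tj) :=
  equilibrium_payoffs_feasible_and_INTIR_general q u r y ν hrmeas κ hκr hκy hκindist_r hκindist_y σ
    hσ
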